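/- Suppose the transfer function G is Hermitian, i.e. every A_j is Hermitian, C = B^*, and D is Hermitian, and assume B ≠ 0. Let w = (w_0, w_1) be a proper permutation of {0,1,…,m}. Then the PGF pencil 𝕂_w(λ) of G is a Hermitian pencil if and only if the PGF pencil K_w(λ) of P is a Hermitian pencil and CIP(w_0) = (0, 0); in that case 𝕂_w(λ) = [[K_w(λ), e_m ⊗ B],[e_m^T ⊗ B^*, D]]. -/

import Mathlib

open Matrix

open Fin.NatCast

noncomputable section

/-- The matrix polynomial `P(λ) = A_0 + λ A_1 + ⋯ + λ^m A_m` evaluated at `lam`. -/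
def PEval (m n : ℕ) (A : Fin (m + 1) → Matrix (Fin n) (Fin n) ℂ) (lam : ℂ) :
    Matrix (Fin n) (Fin n) ℂ :=
  ∑ j : Fin (m + 1), lam ^ (j : ℕ) • A j

/-- `P` is regular: `det P(λ)` is not identically zero. -/
def Regular (m n : ℕ) (A : Fin (m + 1) → Matrix (Fin n) (Fin n) ℂ) : Prop :=
  ∃ lam : ℂ, (PEval m n A lam).det ≠ 0

/-- The Fiedler matrix `M_i` of `P`, an `nm × nm` matrix indexed blockwise by `Fin m × Fin n`
(block row `0` is the top block row). -/
def FM (m n : ℕ) (A : Fin (m + 1) → Matrix (Fin n) (Fin n) ℂ) (i : ℕ) :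
    Matrix (Fin m × Fin n) (Fin m × Fin n) ℂ :=
  Matrix.of fun p q =>
    (if i = 0 then
      if p.1 = q.1 then
        (if (p.1 : ℕ) = m - 1 then -A 0 else (1 : Matrix (Fin n) (Fin n) ℂ)) else 0
    else if i = m then
      if p.1 = q.1 then (if (p.1 : ℕ) = 0 then A (m : Fin (m + 1)) else 1) else 0
    else
      if (p.1 : ℕ) = m - i - 1 ∧ (q.1 : ℕ) = m - i - 1 then -A (i : Fin (m + 1))
      else if (p.1 : ℕ) = m - i - 1 ∧ (q.1 : ℕ) = m - i then 1
      else if (p.1 : ℕ) = m - i ∧ (q.1 : ℕ) = m - i - 1 then 1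
      else if (p.1 : ℕ) = m - i ∧ (q.1 : ℕ) = m - i then 0
      else if p.1 = q.1 then 1 else 0) p.2 q.2

/-- `e_j ⊗ B` (with `j` 1-indexed): the `nm × r` block column matrix with `B` in block row `j`. -/
def eB (m n r : ℕ) (j : ℕ) (B : Matrix (Fin n) (Fin r) ℂ) :
    Matrix (Fin m × Fin n) (Fin r) ℂ :=
  Matrix.of fun p q => if (p.1 : ℕ) + 1 = j then B p.2 q else 0

/-- `e_j^T ⊗ C` (with `j` 1-indexed): the `r × nm` block row matrix with `C` in block column `j`. -/
def eC (m n r : ℕ) (j : ℕ) (C : Matrix (Fin r) (Fin n) ℂ) :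
    Matrix (Fin r) (Fin m × Fin n) ℂ :=
  Matrix.of fun q p => if (p.1 : ℕ) + 1 = j then C q p.2 else 0

/-- `M_σ = M_{σ⁻¹(1)} M_{σ⁻¹(2)} ⋯ M_{σ⁻¹(m)}` (here positions are 0-indexed: `σ i` is the
0-indexed position of the factor `M_i`). -/
def Mperm (m n : ℕ) (A : Fin (m + 1) → Matrix (Fin n) (Fin n) ℂ) (σ : Equiv.Perm (Fin m)) :
    Matrix (Fin m × Fin n) (Fin m × Fin n) ℂ :=
  (List.ofFn fun j : Fin m => FM m n A ((σ.symm j : Fin m) : ℕ)).prod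

/-- The Fiedler pencil `L_σ(λ) = λ M_m − M_σ` of `P` evaluated at `lam`. -/
def LP (m n : ℕ) (A : Fin (m + 1) → Matrix (Fin n) (Fin n) ℂ) (σ : Equiv.Perm (Fin m))
    (lam : ℂ) : Matrix (Fin m × Fin n) (Fin m × Fin n) ℂ :=
  lam • FM m n A m - Mperm m n A σ

/-- `σ` has a consecution at `d` (i.e. `σ(d) < σ(d+1)`). -/
def ConsAt (m : ℕ) (σ : Equiv.Perm (Fin m)) (d : ℕ) : Prop :=
  ∃ h : d + 1 < m, (σ ⟨d, Nat.lt_of_succ_lt h⟩ : ℕ) < (σ ⟨d + 1, h⟩ : ℕ)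

/-- `σ` has an inversion at `d` (i.e. `σ(d) > σ(d+1)`). -/
def InvAt (m : ℕ) (σ : Equiv.Perm (Fin m)) (d : ℕ) : Prop :=
  ∃ h : d + 1 < m, (σ ⟨d + 1, h⟩ : ℕ) < (σ ⟨d, Nat.lt_of_succ_lt h⟩ : ℕ)

/-- `c1` is the number of initial consecutive consecutions of `σ` (the first entry of CISS(σ)). -/
def IsC1 (m : ℕ) (σ : Equiv.Perm (Fin m)) (c1 : ℕ) : Prop :=
  (∀ d < c1, ConsAt m σ d) ∧ ¬ ConsAt m σ c1

/-- `i1` is the number of consecutive inversions of `σ` at `c1, …, c1 + i1 − 1`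
(the second entry of CISS(σ)). -/
def IsI1 (m : ℕ) (σ : Equiv.Perm (Fin m)) (c1 i1 : ℕ) : Prop :=
  (∀ d, c1 ≤ d → d < c1 + i1 → InvAt m σ d) ∧ ¬ InvAt m σ (c1 + i1)

/-- The system matrix `S(λ) = [[−P(λ), B], [C, D]]` evaluated at `lam`. -/
def SMat (m n r : ℕ) (A : Fin (m + 1) → Matrix (Fin n) (Fin n) ℂ)
    (B : Matrix (Fin n) (Fin r) ℂ) (C : Matrix (Fin r) (Fin n) ℂ) (D : Matrix (Fin r) (Fin r) ℂ)
    (lam : ℂ) : Matrix (Fin n ⊕ Fin r) (Fin n ⊕ Fin r) ℂ :=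
  Matrix.fromBlocks (-(PEval m n A lam)) B C D

/-- The Fiedler pencil `𝕊_σ(λ)` of the system matrix, evaluated at `lam`:
`[[−L_σ(λ), e_m ⊗ B], [e_{m−c1}^T ⊗ C, D]]` if `c1 > 0`, and
`[[−L_σ(λ), e_{m−i1} ⊗ B], [e_m^T ⊗ C, D]]` if `c1 = 0`. -/
def SP (m n r : ℕ) (A : Fin (m + 1) → Matrix (Fin n) (Fin n) ℂ)
    (B : Matrix (Fin n) (Fin r) ℂ) (C : Matrix (Fin r) (Fin n) ℂ) (D : Matrix (Fin r) (Fin r) ℂ)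
    (σ : Equiv.Perm (Fin m)) (c1 i1 : ℕ) (lam : ℂ) :
    Matrix ((Fin m × Fin n) ⊕ Fin r) ((Fin m × Fin n) ⊕ Fin r) ℂ :=
  if 0 < c1 then
    Matrix.fromBlocks (-(LP m n A σ lam)) (eB m n r m B) (eC m n r (m - c1) C) D
  else
    Matrix.fromBlocks (-(LP m n A σ lam)) (eB m n r (m - i1) B) (eC m n r m C) D

/-- The Fiedler matrices `𝕄_i` of the system matrix `S(λ)`. -/
def SFM (m n r : ℕ) (A : Fin (m + 1) → Matrix (Fin n) (Fin n) ℂ)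
    (B : Matrix (Fin n) (Fin r) ℂ) (C : Matrix (Fin r) (Fin n) ℂ) (D : Matrix (Fin r) (Fin r) ℂ)
    (i : ℕ) : Matrix ((Fin m × Fin n) ⊕ Fin r) ((Fin m × Fin n) ⊕ Fin r) ℂ :=
  if i = 0 then Matrix.fromBlocks (FM m n A 0) (-(eB m n r m B)) (-(eC m n r m C)) (-D)
  else if i = m then Matrix.fromBlocks (FM m n A m) 0 0 0
  else Matrix.fromBlocks (FM m n A i) 0 0 1

/-- `w = (w0, w1)` is a proper permutation of `{0, 1, …, m}`. -/
def ProperPerm (m : ℕ) (w0 w1 : List ℕ) : Prop :=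
  List.Perm (w0 ++ w1) (List.range (m + 1)) ∧ 0 ∈ w0 ∧ m ∈ w1

/-- `M̂_{w0}`: the product of the Fiedler matrices of `P` in the order listed in `w0`. -/
def hatM0 (m n : ℕ) (A : Fin (m + 1) → Matrix (Fin n) (Fin n) ℂ) (w0 : List ℕ) :
    Matrix (Fin m × Fin n) (Fin m × Fin n) ℂ :=
  (w0.map (FM m n A)).prod

/-- `M̂_{w1} = M_{i1}⁻¹ ⋯ M_{ip}⁻¹ M_m M_{j1}⁻¹ ⋯ M_{jq}⁻¹` for `w1 = (i1,…,ip,m,j1,…,jq)`. -/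
def hatM1 (m n : ℕ) (A : Fin (m + 1) → Matrix (Fin n) (Fin n) ℂ) (w1 : List ℕ) :
    Matrix (Fin m × Fin n) (Fin m × Fin n) ℂ :=
  (w1.map (fun i => if i = m then FM m n A m else (FM m n A i)⁻¹)).prod

/-- The PGF pencil `K_w(λ) = λ M̂_{w1} − M̂_{w0}` of `P`, evaluated at `lam`. -/
def KP (m n : ℕ) (A : Fin (m + 1) → Matrix (Fin n) (Fin n) ℂ) (w0 w1 : List ℕ) (lam : ℂ) :
    Matrix (Fin m × Fin n) (Fin m × Fin n) ℂ :=
  lam • hatM1 m n A w1 - hatM0 m n A w0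

/-- `𝕄̂_{w0}` for the system Fiedler matrices. -/
def hatS0 (m n r : ℕ) (A : Fin (m + 1) → Matrix (Fin n) (Fin n) ℂ)
    (B : Matrix (Fin n) (Fin r) ℂ) (C : Matrix (Fin r) (Fin n) ℂ) (D : Matrix (Fin r) (Fin r) ℂ)
    (w0 : List ℕ) : Matrix ((Fin m × Fin n) ⊕ Fin r) ((Fin m × Fin n) ⊕ Fin r) ℂ :=
  (w0.map (SFM m n r A B C D)).prod

/-- `𝕄̂_{w1}` for the system Fiedler matrices. -/
def hatS1 (m n r : ℕ) (A : Fin (m + 1) → Matrix (Fin n) (Fin n) ℂ)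
    (B : Matrix (Fin n) (Fin r) ℂ) (C : Matrix (Fin r) (Fin n) ℂ) (D : Matrix (Fin r) (Fin r) ℂ)
    (w1 : List ℕ) : Matrix ((Fin m × Fin n) ⊕ Fin r) ((Fin m × Fin n) ⊕ Fin r) ℂ :=
  (w1.map (fun i => if i = m then SFM m n r A B C D m else (SFM m n r A B C D i)⁻¹)).prod

/-- The PGF pencil `𝕂_w(λ) = λ 𝕄̂_{w1} − 𝕄̂_{w0}` of `G`, evaluated at `lam`. -/
def SKP (m n r : ℕ) (A : Fin (m + 1) → Matrix (Fin n) (Fin n) ℂ)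
    (B : Matrix (Fin n) (Fin r) ℂ) (C : Matrix (Fin r) (Fin n) ℂ) (D : Matrix (Fin r) (Fin r) ℂ)
    (w0 w1 : List ℕ) (lam : ℂ) :
    Matrix ((Fin m × Fin n) ⊕ Fin r) ((Fin m × Fin n) ⊕ Fin r) ℂ :=
  lam • hatS1 m n r A B C D w1 - hatS0 m n r A B C D w0

/-- The index tuple `w` has a consecution at `d`. -/
def LCons (w : List ℕ) (d : ℕ) : Prop :=
  d ∈ w ∧ d + 1 ∈ w ∧ w.idxOf d < w.idxOf (d + 1)

/-- The index tuple `w` has an inversion at `d`. -/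
def LInv (w : List ℕ) (d : ℕ) : Prop :=
  d ∈ w ∧ d + 1 ∈ w ∧ w.idxOf (d + 1) < w.idxOf d

/-- `CIP(w) = (c0, i0)`. -/
def IsCIP (w : List ℕ) (c0 i0 : ℕ) : Prop :=
  ((∀ d < c0, LCons w d) ∧ ¬ LCons w c0) ∧ ((∀ d < i0, LInv w d) ∧ ¬ LInv w i0)

/-- Block index of an index of an `(nm+r) × (nm+r)` matrix: the first `m` (diagonal) blocks
have size `n`, the last one size `r`. -/
def sIdx (m n r : ℕ) : (Fin m × Fin n) ⊕ Fin r → ℕ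
  | Sum.inl p => p.1
  | Sum.inr _ => m

/-- An `(nm+r) × (nm+r)` matrix has block bandwidth `k` (e.g. `k = 1`: block tridiagonal,
`k = 2`: block pentadiagonal). -/
def BlockBandS (m n r : ℕ) (k : ℕ)
    (M : Matrix ((Fin m × Fin n) ⊕ Fin r) ((Fin m × Fin n) ⊕ Fin r) ℂ) : Prop :=
  ∀ x y, (sIdx m n r x + k < sIdx m n r y ∨ sIdx m n r y + k < sIdx m n r x) → M x y = 0

/-- An `nm × nm` matrix has block bandwidth `k`. -/
def BlockBandP (m n : ℕ) (k : ℕ) (M : Matrix (Fin m × Fin n) (Fin m × Fin n) ℂ) : Prop :=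
  ∀ x y : Fin m × Fin n, ((x.1 : ℕ) + k < (y.1 : ℕ) ∨ (y.1 : ℕ) + k < (x.1 : ℕ)) → M x y = 0

/-- The degree-`k` Horner shift `P_k(λ) = A_{m−k} + λ A_{m−k+1} + ⋯ + λ^k A_m`. -/
def Horner (m n : ℕ) (A : Fin (m + 1) → Matrix (Fin n) (Fin n) ℂ) (k : Fin (m + 1)) (lam : ℂ) :
    Matrix (Fin n) (Fin n) ℂ :=
  ∑ j : Fin ((k : ℕ) + 1),
    lam ^ (j : ℕ) • A ⟨m - (k : ℕ) + (j : ℕ), by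
      have h1 := j.isLt; have h2 := k.isLt; omega⟩

/-- `N_1`: the zero-degree coefficient of the first companion pencil of `P`. -/
def N1 (m n : ℕ) (A : Fin (m + 1) → Matrix (Fin n) (Fin n) ℂ) :
    Matrix (Fin m × Fin n) (Fin m × Fin n) ℂ :=
  Matrix.of fun p q =>
    (if (p.1 : ℕ) = 0 then -A ((m - 1 - (q.1 : ℕ) : ℕ) : Fin (m + 1))
     else if (p.1 : ℕ) = (q.1 : ℕ) + 1 then (1 : Matrix (Fin n) (Fin n) ℂ)
     else 0) p.2 q.2

/-- `N_2`: the zero-degree coefficient of the second companion pencil of `P`. -/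
def N2 (m n : ℕ) (A : Fin (m + 1) → Matrix (Fin n) (Fin n) ℂ) :
    Matrix (Fin m × Fin n) (Fin m × Fin n) ℂ :=
  Matrix.of fun p q =>
    (if (q.1 : ℕ) = 0 then -A ((m - 1 - (p.1 : ℕ) : ℕ) : Fin (m + 1))
     else if (q.1 : ℕ) = (p.1 : ℕ) + 1 then (1 : Matrix (Fin n) (Fin n) ℂ)
     else 0) p.2 q.2

/-- The first companion form `C_1(λ) = [[−L_1(λ), e_1 ⊗ B], [e_m^T ⊗ C, D]]` of `S`. -/
def C1P (m n r : ℕ) (A : Fin (m + 1) → Matrix (Fin n) (Fin n) ℂ)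
    (B : Matrix (Fin n) (Fin r) ℂ) (C : Matrix (Fin r) (Fin n) ℂ) (D : Matrix (Fin r) (Fin r) ℂ)
    (lam : ℂ) : Matrix ((Fin m × Fin n) ⊕ Fin r) ((Fin m × Fin n) ⊕ Fin r) ℂ :=
  Matrix.fromBlocks (-(lam • FM m n A m - N1 m n A)) (eB m n r 1 B) (eC m n r m C) D

/-- The second companion form `C_2(λ) = [[−L_2(λ), e_m ⊗ B], [e_1^T ⊗ C, D]]` of `S`. -/
def C2P (m n r : ℕ) (A : Fin (m + 1) → Matrix (Fin n) (Fin n) ℂ)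
    (B : Matrix (Fin n) (Fin r) ℂ) (C : Matrix (Fin r) (Fin n) ℂ) (D : Matrix (Fin r) (Fin r) ℂ)
    (lam : ℂ) : Matrix ((Fin m × Fin n) ⊕ Fin r) ((Fin m × Fin n) ⊕ Fin r) ℂ :=
  Matrix.fromBlocks (-(lam • FM m n A m - N2 m n A)) (eB m n r m B) (eC m n r 1 C) D

/-!
Write `w₀ = u ++ 0 :: v`. Every `𝕄_i` with `i ≠ 0` is block diagonal, so
`𝕄̂_{w₁} = diag(M̂_{w₁}, 0)` and
`𝕄̂_{w₀} = [[M̂_{w₀}, -M̂_u (e_m ⊗ B)], [-(e_mᵀ ⊗ B^*) M̂_v, -D]]`.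
The Fiedler matrices of a Hermitian polynomial are Hermitian, so `𝕄̂_{w₀}` is Hermitian iff
`M̂_{w₀}` is and `M̂_u (e_m ⊗ B) = M̂_{rev v} (e_m ⊗ B)`.
For `2 ≤ i < m`, `M_i` does not touch the last block row, so it fixes `e_m ⊗ B`, whereas
`M_1 (e_m ⊗ B) = e_{m-1} ⊗ B`. Now `CIP(w₀) = (0, 0)` exactly when `1 ∉ w₀`, and then both sides
equal `e_m ⊗ B`; otherwise `1` lies in exactly one of `u`, `v`, and on that side the last block
row is `0` instead of `B ≠ 0`.
-/

section Fiedler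

variable {m n : ℕ} (A : Fin (m + 1) → Matrix (Fin n) (Fin n) ℂ)

theorem FM_mulVec_apply {i : ℕ} (hi₀ : 1 ≤ i) (hi : i < m) {a b : Fin m}
    (ha : (a : ℕ) = m - i - 1) (hb : (b : ℕ) = m - i) (v : Fin m × Fin n → ℂ)
    (c : Fin m) (x : Fin n) :
    (FM m n A i *ᵥ v) (c, x) =
      if c = a then v (b, x) - (A i *ᵥ fun y => v (a, y)) x
      else if c = b then v (a, x) else v (c, x) := by
  have hab : a ≠ b := fun h => by rw [h] at ha; omega
  have key : ∀ d : Fin m, ((d : ℕ) = m - i - 1 ↔ d = a) ∧ ((d : ℕ) = m - i ↔ d = b) :=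
    fun d => ⟨by rw [← ha, Fin.val_inj], by rw [← hb, Fin.val_inj]⟩
  simp only [mulVec, dotProduct, Fintype.sum_prod_type, FM, of_apply,
    if_neg (show i ≠ 0 by omega), if_neg (show i ≠ m by omega), key]
  split_ifs with hca hcb
  · subst hca
    rw [Finset.sum_eq_add c b hab (fun d _ hd => by simp [hd.1, hd.2, Ne.symm hd.1])
      (by simp) (by simp)]
    simp [hab.symm, Matrix.one_apply, sub_eq_neg_add]
  · subst hcb
    rw [Finset.sum_eq_single a (fun d _ hd => by
      rcases eq_or_ne d c with rfl | hdc
      · simp [hca]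
      · simp [hd, hdc, Ne.symm hdc]) (by simp)]
    simp [hab.symm, Matrix.one_apply]
  · rw [Finset.sum_eq_single c (fun d _ hd => by simp [hca, hcb, Ne.symm hd]) (by simp)]
    simp [hca, hcb, Matrix.one_apply]

theorem FM_mul_apply {κ : Type*} {i : ℕ} (hi₀ : 1 ≤ i) (hi : i < m) {a b : Fin m}
    (ha : (a : ℕ) = m - i - 1) (hb : (b : ℕ) = m - i) (X : Matrix (Fin m × Fin n) κ ℂ)
    (c : Fin m) (x : Fin n) (q : κ) :
    (FM m n A i * X) (c, x) q =
      if c = a then X (b, x) q - (A i *ᵥ fun y => X (a, y) q) x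
      else if c = b then X (a, x) q else X (c, x) q :=
  FM_mulVec_apply A hi₀ hi ha hb (fun p => X p q) c x

theorem isUnit_FM {i : ℕ} (hi₀ : 1 ≤ i) (hi : i < m) : IsUnit (FM m n A i) := by
  rw [← mulVec_injective_iff_isUnit]
  intro v w hvw
  obtain ⟨a, ha⟩ : ∃ a : Fin m, (a : ℕ) = m - i - 1 := ⟨⟨m - i - 1, by omega⟩, rfl⟩
  obtain ⟨b, hb⟩ : ∃ b : Fin m, (b : ℕ) = m - i := ⟨⟨m - i, by omega⟩, rfl⟩
  have hab : a ≠ b := by rw [ne_eq, ← Fin.val_inj]; omega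
  have hrow (c : Fin m) (x : Fin n) := congr_fun hvw (c, x)
  simp only [FM_mulVec_apply A hi₀ hi ha hb] at hrow
  have h_a (x : Fin n) : v (a, x) = w (a, x) := by simpa [hab.symm] using hrow b x
  have h_b (x : Fin n) : v (b, x) = w (b, x) := by
    simpa [funext h_a] using hrow a x
  ext ⟨c, x⟩
  by_cases hca : c = a
  · exact hca ▸ h_a x
  by_cases hcb : c = b
  · exact hcb ▸ h_b x
  simpa [hca, hcb] using hrow c x

theorem FM_conjTranspose (hA : ∀ j, (A j).IsHermitian) (i : ℕ) : (FM m n A i)ᴴ = FM m n A i := by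
  ext ⟨c, x⟩ ⟨d, y⟩
  simp only [FM, conjTranspose_apply, of_apply]
  split_ifs <;> (try subst_vars) <;> (try omega) <;> simp [Matrix.one_apply, (hA _).apply, eq_comm]

variable {r : ℕ} (B : Matrix (Fin n) (Fin r) ℂ)

theorem FM_mul_eB_of_two_le {i : ℕ} (hi₂ : 2 ≤ i) (hi : i < m) :
    FM m n A i * eB m n r m B = eB m n r m B := by
  ext ⟨c, x⟩ q
  rw [FM_mul_apply A (by omega) hi (a := ⟨m - i - 1, by omega⟩) (b := ⟨m - i, by omega⟩) rfl rfl]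
  have ha : m - i - 1 + 1 ≠ m := by omega
  have hb : m - i + 1 ≠ m := by omega
  split_ifs with hca hcb <;> simp only [eB, of_apply, Fin.ext_iff] at *
  · simp [ha, hb, hca, ← Pi.zero_def]
  · simp [ha, hcb, hb]

theorem FM_one_mul_eB (hm : 2 ≤ m) : FM m n A 1 * eB m n r m B = eB m n r (m - 1) B := by
  ext ⟨c, x⟩ q
  rw [FM_mul_apply A le_rfl (by omega) (a := ⟨m - 2, by omega⟩) (b := ⟨m - 1, by omega⟩) rfl rfl]
  have ha : m - 2 + 1 = m - 1 := by omega
  have hb : m - 1 + 1 = m := by omega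
  have ha' : m - 2 + 1 ≠ m := by omega
  split_ifs with hca hcb <;> simp only [eB, of_apply, Fin.ext_iff] at *
  · simp [ha, hb, hca, show m - 1 ≠ m by omega, ← Pi.zero_def]
  · simp [hcb, ha']
  · rw [if_neg (by omega), if_neg (by omega)]

theorem FM_mul_apply_last_of_two_le {κ : Type*} {i : ℕ} (hi₂ : 2 ≤ i) (hi : i < m)
    (X : Matrix (Fin m × Fin n) κ ℂ) {c : Fin m} (hc : (c : ℕ) + 1 = m) (x : Fin n) (q : κ) :
    (FM m n A i * X) (c, x) q = X (c, x) q := by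
  rw [FM_mul_apply A (by omega) hi (a := ⟨m - i - 1, by omega⟩) (b := ⟨m - i, by omega⟩) rfl rfl,
    if_neg (by rw [Fin.ext_iff]; simp; omega), if_neg (by rw [Fin.ext_iff]; simp; omega)]

theorem prod_FM_mul_eB {l : List ℕ} (hl : ∀ j ∈ l, 1 ≤ j ∧ j < m) (h1 : 1 ∉ l) :
    (l.map (FM m n A)).prod * eB m n r m B = eB m n r m B := by
  induction l with
  | nil => simp
  | cons j l ih =>
    have hj : j ≠ 1 := ne_of_mem_of_not_mem List.mem_cons_self h1
    obtain ⟨hj₁, hjm⟩ := hl j List.mem_cons_self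
    rw [List.map_cons, List.prod_cons, Matrix.mul_assoc,
      ih (fun k hk => hl k (List.mem_cons_of_mem _ hk)) (fun h => h1 (List.mem_cons_of_mem _ h)),
      FM_mul_eB_of_two_le A B (by omega) hjm]

theorem prod_FM_mul_apply_last {κ : Type*} {l : List ℕ} (hl : ∀ j ∈ l, 1 ≤ j ∧ j < m)
    (h1 : 1 ∉ l) (X : Matrix (Fin m × Fin n) κ ℂ) {c : Fin m} (hc : (c : ℕ) + 1 = m)
    (x : Fin n) (q : κ) : ((l.map (FM m n A)).prod * X) (c, x) q = X (c, x) q := by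
  induction l with
  | nil => simp
  | cons j l ih =>
    have hj : j ≠ 1 := ne_of_mem_of_not_mem List.mem_cons_self h1
    obtain ⟨hj₁, hjm⟩ := hl j List.mem_cons_self
    rw [List.map_cons, List.prod_cons, Matrix.mul_assoc,
      FM_mul_apply_last_of_two_le A (by omega) hjm _ hc,
      ih (fun k hk => hl k (List.mem_cons_of_mem _ hk)) (fun h => h1 (List.mem_cons_of_mem _ h))]

theorem prod_FM_mul_eB_apply_last_of_one_mem (hm : 2 ≤ m) {l : List ℕ}
    (hl : ∀ j ∈ l, 1 ≤ j ∧ j < m) (hnd : l.Nodup) (h1 : 1 ∈ l) {c : Fin m}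
    (hc : (c : ℕ) + 1 = m) (x : Fin n) (q : Fin r) :
    ((l.map (FM m n A)).prod * eB m n r m B) (c, x) q = 0 := by
  obtain ⟨s, t, rfl⟩ := List.append_of_mem h1
  obtain ⟨hs, ht⟩ : 1 ∉ s ∧ 1 ∉ t := by
    simpa using (List.nodup_cons.1 (List.nodup_middle.1 hnd)).1
  rw [List.map_append, List.prod_append, List.map_cons, List.prod_cons, Matrix.mul_assoc,
    Matrix.mul_assoc, prod_FM_mul_eB A B (fun j hj => hl j (by simp [hj])) ht,
    FM_one_mul_eB A B hm, prod_FM_mul_apply_last A (fun j hj => hl j (by simp [hj])) hs _ hc]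
  simp [eB, hc]
  omega

theorem prod_FM_mul_eB_ne (hm : 2 ≤ m) (hB : B ≠ 0) {l l' : List ℕ}
    (hl : ∀ j ∈ l, 1 ≤ j ∧ j < m) (hnd : l.Nodup) (h1 : 1 ∈ l)
    (hl' : ∀ j ∈ l', 1 ≤ j ∧ j < m) (h1' : 1 ∉ l') :
    (l.map (FM m n A)).prod * eB m n r m B ≠ (l'.map (FM m n A)).prod * eB m n r m B := by
  intro h
  apply hB
  ext x q
  have hc : ((⟨m - 1, by omega⟩ : Fin m) : ℕ) + 1 = m := by simp; omega
  have := congr_fun (congr_fun h (⟨m - 1, by omega⟩, x)) q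
  rw [prod_FM_mul_eB_apply_last_of_one_mem A B hm hl hnd h1 hc, prod_FM_mul_eB A B hl' h1'] at this
  simpa [eB, hc] using this.symm

end Fiedler

theorem list_prod_map_fromBlocks {ι α l o : Type*} [Fintype l] [Fintype o] [DecidableEq l]
    [DecidableEq o] [Semiring α] (s : List ι) (f : ι → Matrix l l α) (g : ι → Matrix o o α) :
    (s.map fun i => fromBlocks (f i) 0 0 (g i)).prod =
      fromBlocks (s.map f).prod 0 0 (s.map g).prod := by
  induction s with
  | nil => simp [fromBlocks_one]
  | cons i s ih => simp [ih, fromBlocks_multiply]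

section System

variable {m n r : ℕ} (A : Fin (m + 1) → Matrix (Fin n) (Fin n) ℂ) (B : Matrix (Fin n) (Fin r) ℂ)
  (C : Matrix (Fin r) (Fin n) ℂ) (D : Matrix (Fin r) (Fin r) ℂ)

theorem SFM_of_lt {i : ℕ} (hi₀ : 1 ≤ i) (hi : i < m) :
    SFM m n r A B C D i = fromBlocks (FM m n A i) 0 0 1 := by
  rw [SFM, if_neg (by omega), if_neg (by omega)]

theorem inv_SFM {i : ℕ} (hi₀ : 1 ≤ i) (hi : i < m) :
    (SFM m n r A B C D i)⁻¹ = fromBlocks (FM m n A i)⁻¹ 0 0 1 := by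
  rw [SFM_of_lt A B C D hi₀ hi,
    inv_fromBlocks_zero₂₁_of_isUnit_iff _ _ _ (iff_of_true (isUnit_FM A hi₀ hi) isUnit_one)]
  simp

theorem hatS1_eq {w1 : List ℕ} (hw1 : ∀ j ∈ w1, 1 ≤ j ∧ j ≤ m) (hm : m ∈ w1) :
    hatS1 m n r A B C D w1 = fromBlocks (hatM1 m n A w1) 0 0 0 := by
  have hfactor : ∀ j ∈ w1,
      (if j = m then SFM m n r A B C D m else (SFM m n r A B C D j)⁻¹) =
        fromBlocks (if j = m then FM m n A m else (FM m n A j)⁻¹) 0 0 (if j = m then 0 else 1) := by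
    intro j hj
    split_ifs with hjm
    · rw [SFM, if_neg (by have := hw1 m hm; omega), if_pos rfl]
    · exact inv_SFM A B C D (hw1 j hj).1 (lt_of_le_of_ne (hw1 j hj).2 hjm)
  have hzero : (w1.map fun j => if j = m then (0 : Matrix (Fin r) (Fin r) ℂ) else 1).prod = 0 :=
    List.prod_eq_zero (List.mem_map.2 ⟨m, hm, if_pos rfl⟩)
  rw [hatS1, List.map_congr_left hfactor, list_prod_map_fromBlocks, hatM1, hzero]

theorem hatS0_eq {u v : List ℕ} (hu : ∀ j ∈ u, 1 ≤ j ∧ j < m) (hv : ∀ j ∈ v, 1 ≤ j ∧ j < m) :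
    hatS0 m n r A B C D (u ++ 0 :: v) =
      fromBlocks (hatM0 m n A (u ++ 0 :: v)) (-((u.map (FM m n A)).prod * eB m n r m B))
        (-(eC m n r m C * (v.map (FM m n A)).prod)) (-D) := by
  have hdiag : ∀ s : List ℕ, (∀ j ∈ s, 1 ≤ j ∧ j < m) →
      (s.map (SFM m n r A B C D)).prod = fromBlocks (s.map (FM m n A)).prod 0 0 1 := by
    intro s hs
    rw [List.map_congr_left fun j hj => SFM_of_lt A B C D (hs j hj).1 (hs j hj).2,
      list_prod_map_fromBlocks]
    simp
  rw [hatS0, List.map_append, List.prod_append, List.map_cons, List.prod_cons, hdiag u hu,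
    hdiag v hv, SFM, if_pos rfl, hatM0]
  simp [fromBlocks_multiply]

theorem eC_conjTranspose (j : ℕ) : eC m n r j Bᴴ = (eB m n r j B)ᴴ := by
  ext q p
  simp only [eC, eB, of_apply, conjTranspose_apply]
  split_ifs <;> simp

theorem eC_mul_prod_FM (hA : ∀ j, (A j).IsHermitian) (l : List ℕ) :
    eC m n r m Bᴴ * (l.map (FM m n A)).prod =
      ((l.reverse.map (FM m n A)).prod * eB m n r m B)ᴴ := by
  have hFM : conjTranspose ∘ FM m n A = FM m n A := funext (FM_conjTranspose A hA)
  rw [conjTranspose_mul, conjTranspose_list_prod, List.map_map, hFM, eC_conjTranspose,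
    List.map_reverse, List.reverse_reverse]

theorem hatS0_isHermitian_iff (hA : ∀ j, (A j).IsHermitian) (hD : D.IsHermitian) {u v : List ℕ}
    (hu : ∀ j ∈ u, 1 ≤ j ∧ j < m) (hv : ∀ j ∈ v, 1 ≤ j ∧ j < m) :
    (hatS0 m n r A B Bᴴ D (u ++ 0 :: v)).IsHermitian ↔
      (hatM0 m n A (u ++ 0 :: v)).IsHermitian ∧
        (u.map (FM m n A)).prod * eB m n r m B =
          (v.reverse.map (FM m n A)).prod * eB m n r m B := by
  rw [hatS0_eq A B Bᴴ D hu hv, isHermitian_fromBlocks_iff, eC_mul_prod_FM A B hA]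
  simp only [conjTranspose_neg, neg_inj, conjTranspose_inj, conjTranspose_conjTranspose,
    hD.neg, and_true]
  exact and_congr_right fun _ => ⟨fun h => h.1, fun h => ⟨h, h.symm⟩⟩

theorem not_isHermitian_hatS0_of_one_mem (hm : 2 ≤ m) (hA : ∀ j, (A j).IsHermitian)
    (hD : D.IsHermitian) (hB : B ≠ 0) {u v : List ℕ} (huv : (u ++ v).Nodup)
    (hmem : ∀ j ∈ u ++ v, 1 ≤ j ∧ j < m) (h1 : 1 ∈ u ++ v) :
    ¬(hatS0 m n r A B Bᴴ D (u ++ 0 :: v)).IsHermitian := by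
  obtain ⟨hu, hv, hdisj⟩ := List.nodup_append.1 huv
  have hmu : ∀ j ∈ u, 1 ≤ j ∧ j < m := fun j hj => hmem j (List.mem_append_left _ hj)
  have hmv : ∀ j ∈ v, 1 ≤ j ∧ j < m := fun j hj => hmem j (List.mem_append_right _ hj)
  have hmv' : ∀ j ∈ v.reverse, 1 ≤ j ∧ j < m := fun j hj => hmv j (List.mem_reverse.1 hj)
  rw [hatS0_isHermitian_iff A B D hA hD hmu hmv]
  rintro ⟨-, h⟩
  rcases List.mem_append.1 h1 with h1u | h1v
  · exact prod_FM_mul_eB_ne A B hm hB hmu hu h1u hmv'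
      (fun h1v => hdisj _ h1u _ (List.mem_reverse.1 h1v) rfl) h
  · exact prod_FM_mul_eB_ne A B hm hB hmv' (List.nodup_reverse.2 hv) (List.mem_reverse.2 h1v) hmu
      (fun h1u => hdisj _ h1u _ h1v rfl) h.symm

end System

section Permutations

variable {m : ℕ} {w0 w1 : List ℕ}

theorem ProperPerm.forall_mem_right (hw : ProperPerm m w0 w1) : ∀ j ∈ w1, 1 ≤ j ∧ j ≤ m := by
  obtain ⟨hperm, h0, -⟩ := hw
  have hdisj := (List.nodup_append.1 (hperm.nodup_iff.2 List.nodup_range)).2.2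
  intro j hj
  have hj0 : j ≠ 0 := fun h => hdisj _ h0 _ hj h.symm
  have := List.mem_range.1 (hperm.subset (List.mem_append_right _ hj))
  omega

theorem ProperPerm.exists_eq_append_zero_cons (hw : ProperPerm m w0 w1) :
    ∃ u v, w0 = u ++ 0 :: v ∧ (u ++ v).Nodup ∧ ∀ j ∈ u ++ v, 1 ≤ j ∧ j < m := by
  obtain ⟨hperm, h0, hm⟩ := hw
  obtain ⟨hnd0, -, hdisj⟩ := List.nodup_append.1 (hperm.nodup_iff.2 List.nodup_range)
  obtain ⟨u, v, rfl⟩ := List.append_of_mem h0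
  obtain ⟨h0uv, huv⟩ := List.nodup_cons.1 (List.nodup_middle.1 hnd0)
  refine ⟨u, v, rfl, huv, fun j hj => ?_⟩
  have hjw0 : j ∈ u ++ 0 :: v := by simp only [List.mem_append, List.mem_cons] at hj ⊢; tauto
  have hj0 : j ≠ 0 := fun h => h0uv (h ▸ hj)
  have hjm : j ≠ m := fun h => hdisj _ hjw0 _ hm h
  have := List.mem_range.1 (hperm.subset (List.mem_append_left _ hjw0))
  omega

end Permutations

theorem IsCIP.eq_zero_and_eq_zero_iff {w : List ℕ} {c0 i0 : ℕ} (h : IsCIP w c0 i0) (h0 : 0 ∈ w) :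
    c0 = 0 ∧ i0 = 0 ↔ 1 ∉ w := by
  obtain ⟨⟨hc, hnc⟩, ⟨hi, hni⟩⟩ := h
  constructor
  · rintro ⟨rfl, rfl⟩ h1
    have hne : w.idxOf 0 ≠ w.idxOf 1 := fun h => absurd ((List.idxOf_inj h0).1 h) (by omega)
    rcases Nat.lt_or_gt_of_ne hne with hlt | hlt
    · exact hnc ⟨h0, h1, hlt⟩
    · exact hni ⟨h0, h1, hlt⟩
  · intro h1
    refine ⟨Nat.eq_zero_of_not_pos fun hpos => h1 (hc 0 hpos).2.1,
      Nat.eq_zero_of_not_pos fun hpos => h1 (hi 0 hpos).2.1⟩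

theorem stmt9_general (m n r : ℕ) (hm : 2 ≤ m)
    (A : Fin (m + 1) → Matrix (Fin n) (Fin n) ℂ)
    (B : Matrix (Fin n) (Fin r) ℂ) (C : Matrix (Fin r) (Fin n) ℂ)
    (D : Matrix (Fin r) (Fin r) ℂ)
    (hA : ∀ j, (A j).IsHermitian) (hC : C = Bᴴ) (hD : D.IsHermitian) (hB : B ≠ 0)
    (w0 w1 : List ℕ) (hw : ProperPerm m w0 w1)
    (c0 i0 : ℕ) (hcip : IsCIP w0 c0 i0) :
    (((hatS1 m n r A B C D w1).IsHermitian ∧ (hatS0 m n r A B C D w0).IsHermitian) ↔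
      ((hatM1 m n A w1).IsHermitian ∧ (hatM0 m n A w0).IsHermitian ∧ c0 = 0 ∧ i0 = 0)) ∧
    (((hatS1 m n r A B C D w1).IsHermitian ∧ (hatS0 m n r A B C D w0).IsHermitian) →
      ∀ lam : ℂ,
        SKP m n r A B C D w0 w1 lam =
          Matrix.fromBlocks (KP m n A w0 w1 lam) (eB m n r m B) (eC m n r m Bᴴ) D) := by
  subst hC
  have hS1 := hatS1_eq A B Bᴴ D hw.forall_mem_right hw.2.2
  have hcip0 := hcip.eq_zero_and_eq_zero_iff hw.2.1
  obtain ⟨u, v, rfl, huv, hmem⟩ := hw.exists_eq_append_zero_cons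
  have hmu : ∀ j ∈ u, 1 ≤ j ∧ j < m := fun j hj => hmem j (List.mem_append_left _ hj)
  have hmv : ∀ j ∈ v, 1 ≤ j ∧ j < m := fun j hj => hmem j (List.mem_append_right _ hj)
  have h1iff : 1 ∈ u ++ 0 :: v ↔ 1 ∈ u ++ v := by simp
  by_cases h1 : 1 ∈ u ++ v
  · have hS0 := not_isHermitian_hatS0_of_one_mem A B D hm hA hD hB huv hmem h1
    refine ⟨iff_of_false (fun h => hS0 h.2) fun h => ?_, fun h => (hS0 h.2).elim⟩
    exact hcip0.1 h.2.2 (h1iff.2 h1)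
  · have h1u : 1 ∉ u := fun h => h1 (List.mem_append_left _ h)
    have h1v : 1 ∉ v.reverse := fun h => h1 (List.mem_append_right _ (List.mem_reverse.1 h))
    have hS0 : hatS0 m n r A B Bᴴ D (u ++ 0 :: v) =
        fromBlocks (hatM0 m n A (u ++ 0 :: v)) (-eB m n r m B) (-eC m n r m Bᴴ) (-D) := by
      rw [hatS0_eq A B Bᴴ D hmu hmv, eC_mul_prod_FM A B hA, prod_FM_mul_eB A B hmu h1u,
        prod_FM_mul_eB A B (fun j hj => hmv j (List.mem_reverse.1 hj)) h1v, eC_conjTranspose]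
    have hc := hcip0.2 (fun h => h1 (h1iff.1 h))
    refine ⟨?_, fun _ lam => ?_⟩
    · simp [hS1, hS0, isHermitian_fromBlocks_iff, hD.neg, eC_conjTranspose, hc]
    · simp [SKP, KP, hS1, hS0, fromBlocks_smul, sub_eq_add_neg, fromBlocks_neg, fromBlocks_add]

/-- if `G` is Hermitian (every `A_j` is Hermitian, `C = Bᴴ`, `D` Hermitian) and
`B ≠ 0`, then the PGF pencil `𝕂_w(λ)` of `G` is a Hermitian pencil iff the PGF pencil
`K_w(λ)` of `P` is a Hermitian pencil and `CIP(w0) = (0, 0)`; in that case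
`𝕂_w(λ) = [[K_w(λ), e_m ⊗ B], [e_m^T ⊗ Bᴴ, D]]`. -/
theorem stmt9 (m n r : ℕ) (hm : 2 ≤ m) (hn : 1 ≤ n) (hr : 1 ≤ r)
    (A : Fin (m + 1) → Matrix (Fin n) (Fin n) ℂ) (hreg : Regular m n A)
    (B : Matrix (Fin n) (Fin r) ℂ) (C : Matrix (Fin r) (Fin n) ℂ)
    (D : Matrix (Fin r) (Fin r) ℂ)
    (hA : ∀ j, (A j).IsHermitian) (hC : C = Bᴴ) (hD : D.IsHermitian) (hB : B ≠ 0)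
    (w0 w1 : List ℕ) (hw : ProperPerm m w0 w1)
    (c0 i0 : ℕ) (hcip : IsCIP w0 c0 i0) :
    (((hatS1 m n r A B C D w1).IsHermitian ∧ (hatS0 m n r A B C D w0).IsHermitian) ↔
      ((hatM1 m n A w1).IsHermitian ∧ (hatM0 m n A w0).IsHermitian ∧ c0 = 0 ∧ i0 = 0)) ∧
    (((hatS1 m n r A B C D w1).IsHermitian ∧ (hatS0 m n r A B C D w0).IsHermitian) →
      ∀ lam : ℂ,
        SKP m n r A B C D w0 w1 lam =
          Matrix.fromBlocks (KP m n A w0 w1 lam) (eB m n r m B) (eC m n r m Bᴴ) D) :=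
  stmt9_general m n r hm A B C D hA hC hD hB w0 w1 hw c0 i0 hcip

end
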